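/- Suppose (s̃,ã) has support disjoint from (s_t,a_t). If P(s̃'|s̃,ã) ≥ P(s_{t+1}|s_t,a_t), then there exists a probability vector θ consistent with P (over an appropriate canonical SCM) such that the counterfactual probability P̃(s̃'|s̃,ã) equals 1. -/

import Mathlib

/-!
The two state-action pairs are distinct, since their successor distributions have disjoint
supports, so the exogenous noise may correlate their rows arbitrarily. As
`P(s_{t+1} | s_t, a_t) ≤ P(s̃' | s̃, ã)`, some coupling of the two rows puts all of the mass of
`s_{t+1}` on the pair `(s̃', s_{t+1})`. Realising this coupling on the two rows, with independent
noise on every other row, gives a canonical SCM in which the numerator of the counterfactual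
probability equals its denominator.
-/

open Finset

theorem sum_mul_div_sum_of_sum_eq {S : Type*} [Fintype S] {p q : S → ℝ} (hp : ∀ x, 0 ≤ p x)
    (h : ∑ x, p x = ∑ y, q y) (x : S) : ∑ y, p x * q y / ∑ z, q z = p x := by
  rw [← sum_div, ← mul_sum]
  rcases eq_or_ne (∑ z, q z) 0 with h0 | h0
  · rw [← h] at h0
    simp [(sum_eq_zero_iff_of_nonneg fun y _ => hp y).1 h0 x (mem_univ x)]
  · exact mul_div_cancel_right₀ _ h0

/-- The coupling is the point mass `q y₀` at `(x₀, y₀)` plus the product of the leftover masses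
normalised by their common total; when that total is `0`, division by zero harmlessly gives `0`. -/
theorem exists_coupling_apply_eq {S : Type*} [Fintype S] [DecidableEq S] {p q : S → ℝ}
    (hp : ∀ x, 0 ≤ p x) (hq : ∀ y, 0 ≤ q y) (hpq : ∑ x, p x = ∑ y, q y) {x₀ y₀ : S}
    (hle : q y₀ ≤ p x₀) :
    ∃ μ : S × S → ℝ, (∀ v, 0 ≤ μ v) ∧ (∀ x, ∑ y, μ (x, y) = p x) ∧
      (∀ y, ∑ x, μ (x, y) = q y) ∧ μ (x₀, y₀) = q y₀ := by
  set p' : S → ℝ := fun x => p x - if x = x₀ then q y₀ else 0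
  set q' : S → ℝ := fun y => q y - if y = y₀ then q y₀ else 0
  have hp' : ∀ x, 0 ≤ p' x := fun x => by
    by_cases hx : x = x₀ <;> simp [p', hx, hle, hp x]
  have hq' : ∀ y, 0 ≤ q' y := fun y => by
    by_cases hy : y = y₀ <;> simp [q', hy, hq y]
  have hpq' : ∑ x, p' x = ∑ y, q' y := by simp [p', q', sum_sub_distrib, hpq]
  refine ⟨fun v => (if v = (x₀, y₀) then q y₀ else 0) + p' v.1 * q' v.2 / ∑ y, q' y,
    fun v => add_nonneg ?_ ?_, fun x => ?_, fun y => ?_, by simp [q']⟩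
  · split_ifs <;> simp [hq]
  · exact div_nonneg (mul_nonneg (hp' _) (hq' _)) (sum_nonneg fun y _ => hq' y)
  · rw [sum_add_distrib, sum_mul_div_sum_of_sum_eq hp' hpq' x]
    by_cases hx : x = x₀ <;> simp [p', hx]
  · simp_rw [sum_add_distrib, ← hpq', mul_comm (p' _)]
    rw [sum_mul_div_sum_of_sum_eq hq' hpq'.symm y]
    by_cases hy : y = y₀ <;> simp [q', hy]

section ProductWeights

variable {β γ : Type*} [Fintype β] [Fintype γ]

theorem sum_filter_fst_mul (μ : β → ℝ) (ρ : γ → ℝ) (p : β → Prop) [DecidablePred p] :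
    ∑ u ∈ univ.filter (fun u : β × γ => p u.1), μ u.1 * ρ u.2
      = (∑ b ∈ univ.filter p, μ b) * ∑ c, ρ c := by
  rw [sum_mul_sum, ← sum_product', ← filter_product_left p, univ_product_univ]

theorem sum_filter_snd_mul (μ : β → ℝ) (ρ : γ → ℝ) (q : γ → Prop) [DecidablePred q] :
    ∑ u ∈ univ.filter (fun u : β × γ => q u.2), μ u.1 * ρ u.2
      = (∑ b, μ b) * ∑ c ∈ univ.filter q, ρ c := by
  rw [sum_mul_sum, ← sum_product', ← filter_product_right q, univ_product_univ]

theorem sum_filter_fst_eq [DecidableEq β] (μ : β × γ → ℝ) (b : β) :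
    ∑ v ∈ univ.filter (fun v : β × γ => v.1 = b), μ v = ∑ c, μ (b, c) := by
  rw [← univ_product_univ, filter_product_left (· = b), filter_eq', if_pos (mem_univ b),
    sum_product, sum_singleton]

theorem sum_filter_snd_eq [DecidableEq γ] (μ : β × γ → ℝ) (c : γ) :
    ∑ v ∈ univ.filter (fun v : β × γ => v.2 = c), μ v = ∑ b, μ (b, c) := by
  rw [← univ_product_univ, filter_product_right (· = c), filter_eq', if_pos (mem_univ c),
    sum_product_right, sum_singleton]

theorem sum_prod_eq_sum_of_forall_sum_eq {μ : β × γ → ℝ} {p : β → ℝ}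
    (hμ : ∀ b, ∑ c, μ (b, c) = p b) : ∑ v, μ v = ∑ b, p b := by
  rw [Fintype.sum_prod_type]
  exact sum_congr rfl fun b _ => hμ b

end ProductWeights

section ProductDistribution

variable {ι S : Type*} [Fintype ι] [Fintype S]

theorem sum_prod_apply_eq_one [DecidableEq ι] (g : ι → S → ℝ) (hg : ∀ k, ∑ s, g k s = 1) :
    ∑ w : ι → S, ∏ k, g k (w k) = 1 := by
  rw [← Fintype.prod_sum]
  exact prod_eq_one fun k _ => hg k

theorem sum_filter_apply_eq_prod [DecidableEq ι] [DecidableEq S] (g : ι → S → ℝ)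
    (hg : ∀ k, ∑ s, g k s = 1) (i : ι) (s : S) :
    ∑ w ∈ univ.filter (fun w : ι → S => w i = s), ∏ k, g k (w k) = g i s := by
  have hfiber : univ.filter (fun w : ι → S => w i = s)
      = Fintype.piFinset fun k => if k = i then {s} else univ := by
    ext w
    simp only [mem_filter, mem_univ, true_and, Fintype.mem_piFinset]
    refine ⟨fun h k => ?_, fun h => by simpa using h i⟩
    split_ifs with hk <;> simp [hk, h]
  rw [hfiber, ← prod_univ_sum]
  simp [sum_ite_index, hg]

end ProductDistribution

theorem sum_filter_comp_equiv_symm {U V : Type*} [Fintype U] [Fintype V] (e : U ≃ V)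
    (θ : U → ℝ) (p : U → Prop) [DecidablePred p] :
    ∑ v ∈ univ.filter (fun v => p (e.symm v)), θ (e.symm v) = ∑ u ∈ univ.filter p, θ u := by
  rw [sum_filter, sum_filter]
  exact e.symm.sum_comp fun u => if p u then θ u else 0

/-- The noise `u = ((x, y), w)` drives row `i` by `x`, row `j` by `y` and every other row `k`
by `w k`. -/
def couplingMechanism {ι S : Type*} [DecidableEq ι] (i j k : ι) (u : (S × S) × (ι → S)) : S :=
  if k = i then u.1.1 else if k = j then u.1.2 else u.2 k

def couplingWeight {ι S : Type*} [Fintype ι] (g : ι → S → ℝ) (μ : S × S → ℝ)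
    (u : (S × S) × (ι → S)) : ℝ :=
  μ u.1 * ∏ k, g k (u.2 k)

theorem couplingWeight_nonneg {ι S : Type*} [Fintype ι] {g : ι → S → ℝ} {μ : S × S → ℝ}
    (hg0 : ∀ k s, 0 ≤ g k s) (hμ0 : ∀ v, 0 ≤ μ v) (u : (S × S) × (ι → S)) :
    0 ≤ couplingWeight g μ u :=
  mul_nonneg (hμ0 u.1) (prod_nonneg fun k _ => hg0 k _)

section CouplingSCM

variable {ι S : Type*} [Fintype ι] [DecidableEq ι] [Fintype S] {g : ι → S → ℝ}
  {μ : S × S → ℝ} {i j : ι}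

theorem sum_couplingWeight (hg1 : ∀ k, ∑ s, g k s = 1) (hμi : ∀ x, ∑ y, μ (x, y) = g i x) :
    ∑ u, couplingWeight g μ u = 1 := by
  unfold couplingWeight
  rw [Fintype.sum_prod_type]
  dsimp only
  rw [← Fintype.sum_mul_sum, sum_prod_eq_sum_of_forall_sum_eq hμi, hg1,
    sum_prod_apply_eq_one g hg1, one_mul]

variable [DecidableEq S]

theorem sum_filter_couplingMechanism (hg1 : ∀ k, ∑ s, g k s = 1)
    (hμi : ∀ x, ∑ y, μ (x, y) = g i x) (hμj : ∀ y, ∑ x, μ (x, y) = g j y) (hij : i ≠ j)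
    (k : ι) (s : S) :
    ∑ u ∈ univ.filter (fun u => couplingMechanism i j k u = s), couplingWeight g μ u
      = g k s := by
  by_cases hki : k = i
  · subst hki
    simp only [couplingMechanism, if_true]
    refine (sum_filter_fst_mul μ (fun w : ι → S => ∏ k, g k (w k)) (·.1 = s)).trans ?_
    rw [sum_filter_fst_eq, hμi, sum_prod_apply_eq_one g hg1, mul_one]
  by_cases hkj : k = j
  · subst hkj
    simp only [couplingMechanism, hij.symm, if_false, if_true]
    refine (sum_filter_fst_mul μ (fun w : ι → S => ∏ k, g k (w k)) (·.2 = s)).trans ?_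
    rw [sum_filter_snd_eq, hμj, sum_prod_apply_eq_one g hg1, mul_one]
  · simp only [couplingMechanism, hki, hkj, if_false]
    refine (sum_filter_snd_mul μ (fun w : ι → S => ∏ k, g k (w k)) (· k = s)).trans ?_
    rw [sum_filter_apply_eq_prod g hg1, sum_prod_eq_sum_of_forall_sum_eq hμi, hg1, one_mul]

theorem sum_filter_couplingMechanism_and (hg1 : ∀ k, ∑ s, g k s = 1) (hij : i ≠ j) (x y : S) :
    ∑ u ∈ univ.filter (fun u => couplingMechanism i j i u = x ∧ couplingMechanism i j j u = y),
      couplingWeight g μ u = μ (x, y) := by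
  simp only [couplingMechanism, hij.symm, if_false, if_true]
  refine (sum_filter_fst_mul μ (fun w : ι → S => ∏ k, g k (w k))
    (fun v => v.1 = x ∧ v.2 = y)).trans ?_
  rw [sum_prod_apply_eq_one g hg1, mul_one,
    filter_congr fun v _ => (Prod.ext_iff (y := (x, y))).symm, filter_eq', if_pos (mem_univ _), sum_singleton]

end CouplingSCM

theorem exists_scm_of_coupling {ι S : Type*} [Fintype ι] [DecidableEq ι] [Fintype S]
    [DecidableEq S] {g : ι → S → ℝ} (hg0 : ∀ k s, 0 ≤ g k s) (hg1 : ∀ k, ∑ s, g k s = 1)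
    {i j : ι} (hij : i ≠ j) {μ : S × S → ℝ} (hμ0 : ∀ v, 0 ≤ μ v)
    (hμi : ∀ x, ∑ y, μ (x, y) = g i x) (hμj : ∀ y, ∑ x, μ (x, y) = g j y) :
    ∃ (U : Type) (_ : Fintype U) (f : ι → U → S) (θ : U → ℝ),
      (∀ u, 0 ≤ θ u) ∧ (∑ u, θ u = 1) ∧
      (∀ k s, ∑ u ∈ univ.filter (fun u => f k u = s), θ u = g k s) ∧
      ∀ x y, ∑ u ∈ univ.filter (fun u => f i u = x ∧ f j u = y), θ u = μ (x, y) := by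
  let e := Fintype.equivFin ((S × S) × (ι → S))
  refine ⟨Fin _, inferInstance, fun k u => couplingMechanism i j k (e.symm u),
    fun u => couplingWeight g μ (e.symm u), fun u => couplingWeight_nonneg hg0 hμ0 _, ?_,
    fun k s => ?_, fun x y => ?_⟩
  · rw [e.symm.sum_comp, sum_couplingWeight hg1 hμi]
  · exact (sum_filter_comp_equiv_symm e _ _).trans
      (sum_filter_couplingMechanism hg1 hμi hμj hij k s)
  · exact (sum_filter_comp_equiv_symm e _ _).trans (sum_filter_couplingMechanism_and hg1 hij x y)

theorem cf_prob_disjoint_ub_one_attained {S A : Type*} [Fintype S] [Fintype A] [DecidableEq S]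
    (P : S → S → A → ℝ)
    (hP0 : ∀ s' s a, 0 ≤ P s' s a)
    (hPsum : ∀ s a, ∑ s', P s' s a = 1)
    (st st1 sc sc' : S) (a_t ac : A)
    (hpos : 0 < P st1 st a_t)
    (hdisj : ∀ s' : S, ¬(0 < P s' sc ac ∧ 0 < P s' st a_t))
    (hge : P st1 st a_t ≤ P sc' sc ac) :
    ∃ (U : Type) (_ : Fintype U) (f : S → A → U → S) (θ : U → ℝ),
      (∀ u, 0 ≤ θ u) ∧ (∑ u, θ u = 1) ∧
      (∀ s a s', ∑ u ∈ Finset.univ.filter (fun u => f s a u = s'), θ u = P s' s a) ∧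
      (∑ u ∈ Finset.univ.filter (fun u => f sc ac u = sc' ∧ f st a_t u = st1), θ u)
          / P st1 st a_t = 1 := by
  classical
  have hne : (sc, ac) ≠ (st, a_t) := by
    intro h
    obtain ⟨rfl, rfl⟩ := Prod.ext_iff.1 h
    exact hdisj st1 ⟨hpos, hpos⟩
  obtain ⟨μ, hμ0, hμc, hμt, hμmax⟩ := exists_coupling_apply_eq (hP0 · sc ac) (hP0 · st a_t)
    ((hPsum sc ac).trans (hPsum st a_t).symm) hge
  obtain ⟨U, hU, f, θ, hθ0, hθ1, hf, hjoint⟩ := exists_scm_of_coupling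
    (g := fun sa s' => P s' sa.1 sa.2) (fun sa s' => hP0 s' sa.1 sa.2)
    (fun sa => hPsum sa.1 sa.2) hne hμ0 hμc hμt
  refine ⟨U, hU, fun s a => f (s, a), θ, hθ0, hθ1, fun s a s' => hf (s, a) s', ?_⟩
  rw [hjoint, hμmax, div_self hpos.ne']
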